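/- Let G be an m×n real matrix, C an n×n real symmetric positive definite matrix, Γ an m×m real symmetric positive definite matrix, y ∈ ℝᵐ, η > 0, and for j = 1,…,N_e let u₀^{(j)} ∈ ℝⁿ, ξ^{(j)} ∈ ℝᵐ and y^{(j)} = y + ξ^{(j)}. Assume: (i) ‖Γ^{-1/2}(y^{(j)} − G u₀^{(j)})‖ > η + (1/2)‖Γ^{-1/2} ξ^{(j)}‖ for every j; (ii) 0 < ρ < 1/‖(G C G^T + Γ)^{1/2} Γ^{-1/2}‖²; and (iii) τ > max{‖(G C G^T + Γ)^{-1/2} Γ^{1/2}‖², 1/ρ} · (max_j ‖Γ^{-1/2}(y^{(j)} − G u₀^{(j)})‖) / (η + (1/2) min_j ‖Γ^{-1/2} ξ^{(j)}‖). Define u₁^{(j)} = u₀^{(j)} + C G^T (G C G^T + Γ)^{-1}(y^{(j)} − G u₀^{(j)}). Then: (a) τ > 1/ρ; (b) for every j, the parameter α = 1 satisfies the discrepancy condition ρ‖Γ^{-1/2}(y^{(j)} − G u₀^{(j)})‖ ≤ ‖Γ^{1/2}(G C G^T + Γ)^{-1}(y^{(j)} − G u₀^{(j)})‖; and (c) for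 every j, ‖Γ^{-1/2}(y^{(j)} − G u₁^{(j)})‖ < τ(η + (1/2)‖Γ^{-1/2} ξ^{(j)}‖), i.e. each ensemble member satisfies the IR-enLM stopping criterion after one iteration, and the IR-enLM output equals the RML ensemble {u₁^{(j)}}. -/

import Mathlib

/-!
Write `Γ = S²`, `B = G C Gᵀ + Γ = T²` with `S`, `T` the symmetric square roots, and
`r = y⁽ʲ⁾ − G u₀⁽ʲ⁾`. After one step the residual is `Γ B⁻¹ r`, so its whitened form is
`S B⁻¹ r = (T⁻¹S)ᵀ(T⁻¹S) (S⁻¹ r)`; symmetrically `S⁻¹ r = (TS⁻¹)ᵀ(TS⁻¹) (S B⁻¹ r)`.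
Since `‖AᵀA‖ = ‖A‖²`, the first identity bounds the new whitened residual by
`‖T⁻¹S‖² ‖S⁻¹ r‖`, which hypothesis (iii) turns into the stopping criterion, and the second
gives the discrepancy condition (b) from hypothesis (ii). Part (a) holds because (i) forces the
ratio in (iii) to exceed `1`.
-/

open Matrix

/-- The Euclidean norm of a vector in `ℝⁿ`. -/
noncomputable def euclNorm {k : ℕ} (v : Fin k → ℝ) : ℝ :=
  ‖(WithLp.equiv 2 (Fin k → ℝ)).symm v‖

/-- The operator (spectral) norm of a matrix, induced by the Euclidean norms. -/
noncomputable def l2OpNorm {k l : ℕ} (A : Matrix (Fin k) (Fin l) ℝ) : ℝ :=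
  ‖LinearMap.toContinuousLinearMap (Matrix.toEuclideanLin A)‖

/-- The positive semidefinite square root of a positive semidefinite matrix
(the Mathlib definition `Matrix.PosSemidef.sqrt` of December 2024, since removed). -/
noncomputable def Matrix.PosSemidef.sqrt {n 𝕜 : Type*} [Fintype n] [DecidableEq n] [RCLike 𝕜]
    [PartialOrder 𝕜]
    {A : Matrix n n 𝕜} (hA : A.PosSemidef) : Matrix n n 𝕜 :=
  hA.1.eigenvectorUnitary.1 * diagonal ((↑) ∘ Real.sqrt ∘ hA.1.eigenvalues) *
  (star hA.1.eigenvectorUnitary : Matrix n n 𝕜)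

namespace Matrix.PosSemidef

variable {n : Type*} [Fintype n] [DecidableEq n] {A : Matrix n n ℝ}

lemma sqrt_mul_self (hA : A.PosSemidef) : hA.sqrt * hA.sqrt = A := by
  set U : Matrix n n ℝ := hA.1.eigenvectorUnitary.1
  set D : Matrix n n ℝ := diagonal ((↑) ∘ Real.sqrt ∘ hA.1.eigenvalues)
  have hU : star U * U = 1 := Unitary.coe_star_mul_self _
  have hD : D * D = diagonal (RCLike.ofReal ∘ hA.1.eigenvalues : n → ℝ) := by
    rw [diagonal_mul_diagonal]
    congr 1; funext i
    simp [Real.mul_self_sqrt (hA.eigenvalues_nonneg i)]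
  conv_rhs => rw [hA.1.spectral_theorem, Unitary.conjStarAlgAut_apply]
  calc U * D * star U * (U * D * star U) = U * D * (star U * U) * D * star U := by
        simp only [Matrix.mul_assoc]
    _ = _ := by rw [hU, Matrix.mul_one, Matrix.mul_assoc U D D, hD]

lemma transpose_sqrt (hA : A.PosSemidef) : hA.sqrtᵀ = hA.sqrt := by
  have h := (PosSemidef.diagonal (d := ((↑) ∘ Real.sqrt ∘ hA.1.eigenvalues : n → ℝ))
    (fun i => by simp [Real.sqrt_nonneg])).mul_mul_conjTranspose_same hA.1.eigenvectorUnitary.1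
  simpa [Matrix.PosSemidef.sqrt, Matrix.IsHermitian, star_eq_conjTranspose,
    Function.comp_def] using h.isHermitian

end Matrix.PosSemidef

lemma Matrix.PosDef.isUnit_det_sqrt {n : Type*} [Fintype n] [DecidableEq n]
    {A : Matrix n n ℝ} (hA : A.PosDef) : IsUnit hA.posSemidef.sqrt.det := by
  have h := hA.det_pos
  rw [← hA.posSemidef.sqrt_mul_self, det_mul] at h
  exact isUnit_iff_ne_zero.2 fun h0 => by simp [h0] at h

lemma euclNorm_nonneg {k : ℕ} (v : Fin k → ℝ) : 0 ≤ euclNorm v := norm_nonneg _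

section L2

open scoped Matrix.Norms.L2Operator

lemma euclNorm_mulVec_le {k l : ℕ} (A : Matrix (Fin k) (Fin l) ℝ) (v : Fin l → ℝ) :
    euclNorm (A *ᵥ v) ≤ l2OpNorm A * euclNorm v :=
  A.l2_opNorm_mulVec ((WithLp.equiv 2 (Fin l → ℝ)).symm v)

lemma euclNorm_transpose_mul_self_mulVec_le {k l : ℕ} (A : Matrix (Fin k) (Fin l) ℝ)
    (v : Fin l → ℝ) : euclNorm ((Aᵀ * A) *ᵥ v) ≤ l2OpNorm A ^ 2 * euclNorm v := by
  have h := A.l2_opNorm_conjTranspose_mul_self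
  rw [conjTranspose_eq_transpose_of_trivial] at h
  calc euclNorm ((Aᵀ * A) *ᵥ v) ≤ l2OpNorm (Aᵀ * A) * euclNorm v := euclNorm_mulVec_le _ _
    _ = l2OpNorm A ^ 2 * euclNorm v := by rw [sq]; exact congrArg (· * euclNorm v) h

end L2

lemma sub_mulVec_kalman_update {m n R : Type*} [Fintype m] [Fintype n] [DecidableEq m]
    [CommRing R] (G : Matrix m n R) (C : Matrix n n R) (Γ : Matrix m m R)
    (hB : IsUnit (G * C * Gᵀ + Γ).det) (y : m → R) (u : n → R) :
    y - G *ᵥ (u + (C * Gᵀ * (G * C * Gᵀ + Γ)⁻¹) *ᵥ (y - G *ᵥ u)) =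
      Γ *ᵥ (G * C * Gᵀ + Γ)⁻¹ *ᵥ (y - G *ᵥ u) := by
  set B := G * C * Gᵀ + Γ
  have hΓ : Γ * B⁻¹ = 1 - G * C * Gᵀ * B⁻¹ := by
    rw [eq_sub_iff_add_eq, ← Matrix.add_mul, add_comm, mul_nonsing_inv B hB]
  rw [mulVec_mulVec, hΓ, sub_mulVec, one_mulVec, mulVec_add, mulVec_mulVec,
    ← Matrix.mul_assoc, ← Matrix.mul_assoc]
  abel

section Whitening

variable {k : ℕ} {S T : Matrix (Fin k) (Fin k) ℝ}

lemma euclNorm_inv_mulVec_le (hS : Sᵀ = S) (hT : Tᵀ = T) (hSu : IsUnit S.det)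
    (hTu : IsUnit T.det) (r : Fin k → ℝ) :
    euclNorm (S⁻¹ *ᵥ r) ≤ l2OpNorm (T * S⁻¹) ^ 2 * euclNorm (S *ᵥ (T * T)⁻¹ *ᵥ r) := by
  have hTTu : IsUnit (T * T).det := by rw [det_mul]; exact hTu.mul hTu
  have h : S⁻¹ *ᵥ r = ((T * S⁻¹)ᵀ * (T * S⁻¹)) *ᵥ (S *ᵥ (T * T)⁻¹ *ᵥ r) := by
    rw [transpose_mul, transpose_nonsing_inv, hS, hT, mulVec_mulVec, mulVec_mulVec]
    simp only [Matrix.mul_assoc, nonsing_inv_mul_cancel_left S _ hSu]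
    rw [← Matrix.mul_assoc T T, mul_nonsing_inv _ hTTu, Matrix.mul_one]
  rw [h]
  exact euclNorm_transpose_mul_self_mulVec_le _ _

lemma euclNorm_mulVec_inv_mul_self_mulVec_le (hS : Sᵀ = S) (hT : Tᵀ = T) (hSu : IsUnit S.det)
    (r : Fin k → ℝ) :
    euclNorm (S *ᵥ (T * T)⁻¹ *ᵥ r) ≤ l2OpNorm (T⁻¹ * S) ^ 2 * euclNorm (S⁻¹ *ᵥ r) := by
  have h : S *ᵥ (T * T)⁻¹ *ᵥ r = ((T⁻¹ * S)ᵀ * (T⁻¹ * S)) *ᵥ (S⁻¹ *ᵥ r) := by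
    rw [transpose_mul, transpose_nonsing_inv, hS, hT, mulVec_mulVec, mulVec_mulVec,
      Matrix.mul_inv_rev]
    simp only [Matrix.mul_assoc, mul_nonsing_inv S hSu, Matrix.mul_one]
  rw [h]
  exact euclNorm_transpose_mul_self_mulVec_le _ _

end Whitening

section Scalar

variable {ι : Type*} [Finite ι] {N E : ι → ℝ} {η M τ : ℝ}

lemma lt_of_mul_iSup_div_lt [Nonempty ι] (hE : ∀ j, 0 ≤ E j) (hη : 0 < η) (hM : 0 ≤ M)
    (hNE : ∀ j, η + 1 / 2 * E j < N j)
    (hτ : M * ((⨆ j, N j) / (η + 1 / 2 * ⨅ j, E j)) < τ) : M < τ := by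
  obtain ⟨j⟩ := ‹Nonempty ι›
  have hd : 0 < η + 1 / 2 * ⨅ j, E j := by
    have := Real.iInf_nonneg hE
    positivity
  have hds : η + 1 / 2 * ⨅ j, E j < ⨆ j, N j :=
    calc η + 1 / 2 * ⨅ j, E j ≤ η + 1 / 2 * E j := by
          gcongr; exact ciInf_le (Finite.bddBelow_range E) j
      _ < N j := hNE j
      _ ≤ ⨆ j, N j := le_ciSup (Finite.bddAbove_range N) j
  calc M ≤ M * ((⨆ j, N j) / (η + 1 / 2 * ⨅ j, E j)) :=
        le_mul_of_one_le_right hM ((one_le_div hd).2 hds.le)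
    _ < τ := hτ

lemma mul_lt_of_mul_iSup_div_lt (hN : ∀ j, 0 ≤ N j) (hE : ∀ j, 0 ≤ E j) (hη : 0 < η)
    (hM : 0 ≤ M) (hτ : M * ((⨆ j, N j) / (η + 1 / 2 * ⨅ j, E j)) < τ) (j : ι) :
    M * N j < τ * (η + 1 / 2 * E j) := by
  have hdj : η + 1 / 2 * ⨅ j, E j ≤ η + 1 / 2 * E j := by
    gcongr; exact ciInf_le (Finite.bddBelow_range E) j
  have hs : 0 ≤ ⨆ j, N j := (hN j).trans (le_ciSup (Finite.bddAbove_range N) j)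
  set d := η + 1 / 2 * ⨅ j, E j
  have hd : 0 < d := by
    have := Real.iInf_nonneg hE
    positivity
  calc M * N j ≤ M * ⨆ j, N j := by
        gcongr; exact le_ciSup (Finite.bddAbove_range N) j
    _ = M * ((⨆ j, N j) / d) * d := by field_simp
    _ ≤ M * ((⨆ j, N j) / d) * (η + 1 / 2 * E j) := by gcongr
    _ < τ * (η + 1 / 2 * E j) := by
        gcongr
        exact hd.trans_le hdj

end Scalar

lemma mul_sq_le_one_of_lt_one_div {ρ K : ℝ} (h : ρ < 1 / K ^ 2) :
    ρ * K ^ 2 ≤ 1 := by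
  rcases (sq_nonneg K).eq_or_lt with hK | hK
  · rw [← hK, mul_zero]; exact zero_le_one
  · exact ((lt_div_iff₀ hK).1 h).le

theorem irenlm_linear_case_general {m n Ne : ℕ} [NeZero Ne]
    (G : Matrix (Fin m) (Fin n) ℝ) (C : Matrix (Fin n) (Fin n) ℝ)
    (Γ : Matrix (Fin m) (Fin m) ℝ) (hΓ : Γ.PosDef)
    (hGCG : (G * C * Gᵀ + Γ).PosDef)
    (η : ℝ) (hη : 0 < η)
    (u₀ : Fin Ne → Fin n → ℝ) (ξ : Fin Ne → Fin m → ℝ)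
    (yj : Fin Ne → Fin m → ℝ)
    (ρ τ : ℝ)
    (h1 : ∀ j, euclNorm ((hΓ.posSemidef.sqrt)⁻¹ *ᵥ (yj j - G *ᵥ u₀ j)) >
      η + (1 / 2) * euclNorm ((hΓ.posSemidef.sqrt)⁻¹ *ᵥ ξ j))
    (h2 : 0 < ρ)
    (h2' : ρ < 1 / l2OpNorm (hGCG.posSemidef.sqrt * (hΓ.posSemidef.sqrt)⁻¹) ^ 2)
    (h3 : τ > max (l2OpNorm ((hGCG.posSemidef.sqrt)⁻¹ * hΓ.posSemidef.sqrt) ^ 2) (1 / ρ) *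
      ((⨆ j, euclNorm ((hΓ.posSemidef.sqrt)⁻¹ *ᵥ (yj j - G *ᵥ u₀ j))) /
        (η + (1 / 2) * ⨅ j, euclNorm ((hΓ.posSemidef.sqrt)⁻¹ *ᵥ ξ j)))) :
    let u₁ : Fin Ne → Fin n → ℝ := fun j =>
      u₀ j + (C * Gᵀ * (G * C * Gᵀ + Γ)⁻¹) *ᵥ (yj j - G *ᵥ u₀ j)
    τ > 1 / ρ ∧
    (∀ j, ρ * euclNorm ((hΓ.posSemidef.sqrt)⁻¹ *ᵥ (yj j - G *ᵥ u₀ j)) ≤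
      euclNorm (hΓ.posSemidef.sqrt *ᵥ (G * C * Gᵀ + Γ)⁻¹ *ᵥ (yj j - G *ᵥ u₀ j))) ∧
    (∀ j, euclNorm ((hΓ.posSemidef.sqrt)⁻¹ *ᵥ (yj j - G *ᵥ u₁ j)) <
      τ * (η + (1 / 2) * euclNorm ((hΓ.posSemidef.sqrt)⁻¹ *ᵥ ξ j))) := by
  intro u₁
  set S := hΓ.posSemidef.sqrt
  set T := hGCG.posSemidef.sqrt
  have hTT : T * T = G * C * Gᵀ + Γ := hGCG.posSemidef.sqrt_mul_self
  have hSu : IsUnit S.det := hΓ.isUnit_det_sqrt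
  have hS := hΓ.posSemidef.transpose_sqrt
  have hT := hGCG.posSemidef.transpose_sqrt
  have hM : 0 ≤ max (l2OpNorm (T⁻¹ * S) ^ 2) (1 / ρ) := le_max_of_le_left (sq_nonneg _)
  refine ⟨(le_max_right _ _).trans_lt
      (lt_of_mul_iSup_div_lt (fun _ => euclNorm_nonneg _) hη hM h1 h3), fun j => ?_, fun j => ?_⟩
  · rw [← hTT]
    calc ρ * euclNorm (S⁻¹ *ᵥ (yj j - G *ᵥ u₀ j))
        ≤ ρ * (l2OpNorm (T * S⁻¹) ^ 2 * euclNorm (S *ᵥ (T * T)⁻¹ *ᵥ (yj j - G *ᵥ u₀ j))) :=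
          mul_le_mul_of_nonneg_left
            (euclNorm_inv_mulVec_le hS hT hSu hGCG.isUnit_det_sqrt _) h2.le
      _ ≤ euclNorm (S *ᵥ (T * T)⁻¹ *ᵥ (yj j - G *ᵥ u₀ j)) := by
          rw [← mul_assoc]
          exact mul_le_of_le_one_left (euclNorm_nonneg _) (mul_sq_le_one_of_lt_one_div h2')
  · have hres : S⁻¹ *ᵥ (yj j - G *ᵥ u₁ j) = S *ᵥ (T * T)⁻¹ *ᵥ (yj j - G *ᵥ u₀ j) := by
      rw [sub_mulVec_kalman_update G C Γ (isUnit_iff_ne_zero.2 hGCG.det_pos.ne'), hTT, ← hΓ.posSemidef.sqrt_mul_self,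
        mulVec_mulVec, ← Matrix.mul_assoc, nonsing_inv_mul S hSu, Matrix.one_mul]
    rw [hres]
    calc _ ≤ l2OpNorm (T⁻¹ * S) ^ 2 * euclNorm (S⁻¹ *ᵥ (yj j - G *ᵥ u₀ j)) :=
          euclNorm_mulVec_inv_mul_self_mulVec_le hS hT hSu _
      _ ≤ max (l2OpNorm (T⁻¹ * S) ^ 2) (1 / ρ) * euclNorm (S⁻¹ *ᵥ (yj j - G *ᵥ u₀ j)) := by
          gcongr
          · exact euclNorm_nonneg _
          · exact le_max_left _ _
      _ < _ := mul_lt_of_mul_iSup_div_lt (fun _ => euclNorm_nonneg _)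
          (fun _ => euclNorm_nonneg _) hη hM h3 j

/-- deterministic content of Proposition 1: under assumptions (i)-(iii),
(a) `τ > 1/ρ`; (b) `α = 1` satisfies the discrepancy condition for each ensemble member;
(c) each member `u₁⁽ʲ⁾ = u₀⁽ʲ⁾ + C Gᵀ (G C Gᵀ + Γ)⁻¹ (y⁽ʲ⁾ − G u₀⁽ʲ⁾)` satisfies the
IR-enLM stopping criterion after one iteration, so the IR-enLM output is the RML ensemble.
(The hypothesis `hGCG` records that `G C Gᵀ + Γ` is symmetric positive definite, which follows
from positive definiteness of `C` and `Γ`.) -/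
theorem irenlm_linear_case {m n Ne : ℕ} [NeZero Ne]
    (G : Matrix (Fin m) (Fin n) ℝ) (C : Matrix (Fin n) (Fin n) ℝ)
    (Γ : Matrix (Fin m) (Fin m) ℝ) (hC : C.PosDef) (hΓ : Γ.PosDef)
    (hGCG : (G * C * Gᵀ + Γ).PosDef)
    (y : Fin m → ℝ) (η : ℝ) (hη : 0 < η)
    (u₀ : Fin Ne → Fin n → ℝ) (ξ : Fin Ne → Fin m → ℝ)
    (yj : Fin Ne → Fin m → ℝ) (hyj : ∀ j, yj j = y + ξ j)
    (ρ τ : ℝ)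
    (h1 : ∀ j, euclNorm ((hΓ.posSemidef.sqrt)⁻¹ *ᵥ (yj j - G *ᵥ u₀ j)) >
      η + (1 / 2) * euclNorm ((hΓ.posSemidef.sqrt)⁻¹ *ᵥ ξ j))
    (h2 : 0 < ρ)
    (h2' : ρ < 1 / l2OpNorm (hGCG.posSemidef.sqrt * (hΓ.posSemidef.sqrt)⁻¹) ^ 2)
    (h3 : τ > max (l2OpNorm ((hGCG.posSemidef.sqrt)⁻¹ * hΓ.posSemidef.sqrt) ^ 2) (1 / ρ) *
      ((⨆ j, euclNorm ((hΓ.posSemidef.sqrt)⁻¹ *ᵥ (yj j - G *ᵥ u₀ j))) /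
        (η + (1 / 2) * ⨅ j, euclNorm ((hΓ.posSemidef.sqrt)⁻¹ *ᵥ ξ j)))) :
    let u₁ : Fin Ne → Fin n → ℝ := fun j =>
      u₀ j + (C * Gᵀ * (G * C * Gᵀ + Γ)⁻¹) *ᵥ (yj j - G *ᵥ u₀ j)
    τ > 1 / ρ ∧
    (∀ j, ρ * euclNorm ((hΓ.posSemidef.sqrt)⁻¹ *ᵥ (yj j - G *ᵥ u₀ j)) ≤
      euclNorm (hΓ.posSemidef.sqrt *ᵥ (G * C * Gᵀ + Γ)⁻¹ *ᵥ (yj j - G *ᵥ u₀ j))) ∧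
    (∀ j, euclNorm ((hΓ.posSemidef.sqrt)⁻¹ *ᵥ (yj j - G *ᵥ u₁ j)) <
      τ * (η + (1 / 2) * euclNorm ((hΓ.posSemidef.sqrt)⁻¹ *ᵥ ξ j))) :=
  irenlm_linear_case_general G C Γ hΓ hGCG η hη u₀ ξ yj ρ τ h1 h2 h2' h3
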